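/- arXiv:2602.00804 — 2 statements merged into one kernel-verified Lean document; each statement's English description precedes it below -/
import Mathlib

section
/- Let Ω ⊆ ℝ^N be open, f ∈ C^∞(Ω), p ∈ Ω, w ∈ ℝ^N and τ > 0 such that p·δ_τ(w) ∈ Ω. Then d²/dτ² [f(p·δ_τ(w))] = ⟨∇^{2,H} f(p·δ_τ(w)) w_H, w_H⟩ + 2 w_N (Tf)(p·δ_τ(w)) + 4τ w_N ⟨∇^H (Tf)(p·δ_τ(w)), w_H⟩ + 4τ² w_N² (TTf)(p·δ_τ(w)), where ∇^{2,H} f is the 2n×2n matrix with entries (∇^{2,H} f)_{ij} = Z_i Z_j f. -/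
open MeasureTheory Filter Topology
open scoped ENNReal

noncomputable section

/-- Points of the Heisenberg group ℍⁿ, identified with ℝ^(2n+1). -/
abbrev HPoint (n : ℕ) := Fin (2 * n + 1) → ℝ

variable {n : ℕ}

/-- Index of the vertical coordinate `t`. -/
def tIdx (n : ℕ) : Fin (2 * n + 1) := ⟨2 * n, by omega⟩

/-- Index of the coordinate `x_j`, `1 ≤ j ≤ n`. -/
def xIdx (n : ℕ) (j : Fin n) : Fin (2 * n + 1) := ⟨j.1, by have := j.2; omega⟩

/-- Index of the coordinate `y_j`, `1 ≤ j ≤ n`. -/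
def yIdx (n : ℕ) (j : Fin n) : Fin (2 * n + 1) := ⟨n + j.1, by have := j.2; omega⟩

/-- Embedding of horizontal indices. -/
def hIdx {n : ℕ} (i : Fin (2 * n)) : Fin (2 * n + 1) := ⟨i.1, by have := i.2; omega⟩

/-- The Heisenberg group law. -/
def hmul (p q : HPoint n) : HPoint n := fun i =>
  if i = tIdx n then
    p i + q i + 2 * ∑ j : Fin n,
      (q (xIdx n j) * p (yIdx n j) - p (xIdx n j) * q (yIdx n j))
  else p i + q i

/-- The Heisenberg inverse: `p⁻¹ = -p`. -/
def hinv (p : HPoint n) : HPoint n := -p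

/-- Intrinsic dilations `δ_λ`. -/
def hdil (lam : ℝ) (w : HPoint n) : HPoint n := fun i =>
  if i = tIdx n then lam ^ 2 * w i else lam * w i

/-- Euclidean partial derivative in the direction of the `k`-th coordinate. -/
def pder (k : Fin (2 * n + 1)) (f : HPoint n → ℝ) (p : HPoint n) : ℝ :=
  fderiv ℝ f p (Pi.single k 1)

/-- Coefficient of `∂_t` in the left invariant vector field `Z_i`. -/
def zCoef {n : ℕ} (i : Fin (2 * n)) (p : HPoint n) : ℝ :=
  if h : i.1 < n then 2 * p (yIdx n ⟨i.1, h⟩)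
  else -2 * p (xIdx n ⟨i.1 - n, by have := i.2; omega⟩)

/-- Horizontal left invariant vector fields `Z_i`, `1 ≤ i ≤ 2n`. -/
def Zd (i : Fin (2 * n)) (f : HPoint n → ℝ) (p : HPoint n) : ℝ :=
  pder (hIdx i) f p + zCoef i p * pder (tIdx n) f p

/-- The vertical vector field `T = ∂_t`. -/
def Td (f : HPoint n → ℝ) (p : HPoint n) : ℝ := pder (tIdx n) f p

/-- Horizontal right invariant vector fields. -/
def Zrd (i : Fin (2 * n)) (f : HPoint n → ℝ) (p : HPoint n) : ℝ :=
  pder (hIdx i) f p - zCoef i p * pder (tIdx n) f p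

/-- All left invariant fields `Z_1, …, Z_N` (with `Z_N = T`). -/
def Zfull (j : Fin (2 * n + 1)) (f : HPoint n → ℝ) (p : HPoint n) : ℝ :=
  if h : j.1 < 2 * n then Zd ⟨j.1, h⟩ f p else Td f p

/-- All right invariant fields `Z_1^r, …, Z_N^r` (with `Z_N^r = T`). -/
def Zrfull (j : Fin (2 * n + 1)) (f : HPoint n → ℝ) (p : HPoint n) : ℝ :=
  if h : j.1 < 2 * n then Zrd ⟨j.1, h⟩ f p else Td f p

/-- Test functions on an open set `Ω`. -/
def IsTestOn (Ω : Set (HPoint n)) (φ : HPoint n → ℝ) : Prop :=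
  ContDiff ℝ (⊤ : ℕ∞) φ ∧ HasCompactSupport φ ∧ tsupport φ ⊆ Ω

/-- `g` is the weak derivative of `f` along `Z_i` on `Ω`. -/
def HasWeakZDerivOn (Ω : Set (HPoint n)) (i : Fin (2 * n)) (f g : HPoint n → ℝ) : Prop :=
  ∀ φ : HPoint n → ℝ, IsTestOn Ω φ →
    ∫ p in Ω, g p * φ p = - ∫ p in Ω, f p * Zd i φ p

/-- `g` is the weak derivative of `f` along `T` on `Ω`. -/
def HasWeakTDerivOn (Ω : Set (HPoint n)) (f g : HPoint n → ℝ) : Prop :=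
  ∀ φ : HPoint n → ℝ, IsTestOn Ω φ →
    ∫ p in Ω, g p * φ p = - ∫ p in Ω, f p * Td φ p

/-- The vector field `Z_i` viewed as a vector at `p`. -/
def zVec (i : Fin (2 * n)) (p : HPoint n) : HPoint n := fun k =>
  (if k = hIdx i then 1 else 0) + (if k = tIdx n then zCoef i p else 0)

/-- The Carnot–Carathéodory distance. -/
def ccDist (p q : HPoint n) : ℝ :=
  sInf {L : ℝ | ∃ γ : ℝ → HPoint n, ∃ h : ℝ → Fin (2 * n) → ℝ, ∃ K : NNReal,
    LipschitzOnWith K γ (Set.Icc 0 1) ∧ γ 0 = p ∧ γ 1 = q ∧ Measurable h ∧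
    (∀ᵐ τ ∂(volume.restrict (Set.Ioo (0:ℝ) 1)),
      HasDerivAt γ (∑ i : Fin (2 * n), h τ i • zVec i (γ τ)) τ) ∧
    L = ∫ τ in Set.Icc (0:ℝ) 1, Real.sqrt (∑ i : Fin (2 * n), h τ i ^ 2)}

/-- Horizontal part `(w_H, 0)` of a point. -/
def horiz (w : HPoint n) : HPoint n := fun k => if k = tIdx n then 0 else w k

/-- Euclidean norm of the horizontal part. -/
def normH (w : HPoint n) : ℝ := Real.sqrt (∑ i : Fin (2 * n), w (hIdx i) ^ 2)

/-- Group convolution `f * g`. -/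
def hconv (f g : HPoint n → ℝ) (p : HPoint n) : ℝ := ∫ q, f q * g (hmul (hinv q) p)

/-- Rescaled mollifier `ρ_ε`. -/
def mollK (ρ : HPoint n → ℝ) (ε : ℝ) (p : HPoint n) : ℝ :=
  (ε ^ (2 * n + 2))⁻¹ * ρ (hdil ε⁻¹ p)
section Aux
variable {n : ℕ}

lemma hIdx_ne_tIdx (i : Fin (2 * n)) : hIdx i ≠ tIdx n := by
  simp only [hIdx, tIdx, Fin.mk.injEq, ne_eq]
  have := i.2; omega

lemma xIdx_ne_tIdx (j : Fin n) : xIdx n j ≠ tIdx n := by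
  simp only [xIdx, tIdx, Fin.mk.injEq, ne_eq]
  have := j.2; omega

lemma yIdx_ne_tIdx (j : Fin n) : yIdx n j ≠ tIdx n := by
  simp only [yIdx, tIdx, Fin.mk.injEq, ne_eq]
  have := j.2; omega

/-- Evaluation of a continuous linear map on a vector, as a sum of partials. -/
lemma fderiv_apply_eq_sum (g : HPoint n → ℝ) (a : HPoint n) (v : HPoint n) :
    fderiv ℝ g a v = ∑ k, v k * pder k g a := by
  have hv : v = ∑ k, v k • (Pi.single k 1 : HPoint n) := by
    have := Finset.univ_sum_single v
    rw [← this]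
    congr 1
    funext k
    ext m
    simp [Pi.single_apply, smul_eq_mul]
  conv_lhs => rw [hv]
  rw [map_sum]
  refine Finset.sum_congr rfl fun k _ => ?_
  rw [_root_.map_smul, pder, smul_eq_mul]

/-- The constant `C = 2 ∑ (w_x p_y - p_x w_y)`. -/
def Cconst (p w : HPoint n) : ℝ :=
  2 * ∑ j : Fin n, (w (xIdx n j) * p (yIdx n j) - p (xIdx n j) * w (yIdx n j))

lemma curve_apply (p w : HPoint n) (σ : ℝ) (k : Fin (2 * n + 1)) :
    hmul p (hdil σ w) k =
      if k = tIdx n then p k + σ ^ 2 * w k + σ * Cconst p w else p k + σ * w k := by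
  by_cases hk : k = tIdx n
  · simp only [hmul, hdil, if_pos hk, Cconst]
    have h : ∀ j : Fin n,
        (if xIdx n j = tIdx n then σ ^ 2 * w (xIdx n j) else σ * w (xIdx n j)) * p (yIdx n j) -
          p (xIdx n j) * (if yIdx n j = tIdx n then σ ^ 2 * w (yIdx n j) else σ * w (yIdx n j)) =
        σ * (w (xIdx n j) * p (yIdx n j) - p (xIdx n j) * w (yIdx n j)) := fun j => by
      rw [if_neg (xIdx_ne_tIdx j), if_neg (yIdx_ne_tIdx j)]; ring
    rw [Finset.sum_congr rfl fun j _ => h j, ← Finset.mul_sum]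
    ring
  · simp only [hmul, hdil, if_neg hk]

def vvec (p w : HPoint n) (σ : ℝ) : HPoint n := fun k =>
  if k = tIdx n then 2 * σ * w k + Cconst p w else w k

lemma curve_hasDerivAt (p w : HPoint n) (σ : ℝ) :
    HasDerivAt (fun σ' => hmul p (hdil σ' w)) (vvec p w σ) σ := by
  rw [hasDerivAt_pi]
  intro k
  have hfun : (fun σ' => hmul p (hdil σ' w) k) =
      fun σ' : ℝ => if k = tIdx n then p k + σ' ^ 2 * w k + σ' * Cconst p w
        else p k + σ' * w k := funext fun σ' => curve_apply p w σ' k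
  rw [hfun]
  by_cases hk : k = tIdx n
  · simp only [if_pos hk, vvec]
    have h1 := ((hasDerivAt_pow 2 σ).mul_const (w k)).const_add (p k)
    have h2 := (hasDerivAt_id σ).mul_const (Cconst p w)
    have := h1.add h2
    convert this using 1
    · funext x; rfl
    push_cast
    ring
  · simp only [if_neg hk, vvec]
    simpa using ((hasDerivAt_id σ).mul_const (w k)).const_add (p k)

end Aux
section Aux2
variable {n : ℕ}

lemma sum_split (f : Fin (2 * n) → ℝ) :
    ∑ i, f i = ∑ j : Fin n, f ⟨j.1, by have := j.2; omega⟩ +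
      ∑ j : Fin n, f ⟨n + j.1, by have := j.2; omega⟩ := by
  have h : n + n = 2 * n := (two_mul n).symm
  rw [← Fin.sum_congr' f h, Fin.sum_univ_add]
  congr 1

lemma zCoef_sum (p w : HPoint n) (σ : ℝ) :
    ∑ i : Fin (2 * n), zCoef i (hmul p (hdil σ w)) * w (hIdx i) = Cconst p w := by
  rw [sum_split (fun i => zCoef i (hmul p (hdil σ w)) * w (hIdx i))]
  have h1 : ∀ j : Fin n,
      zCoef (⟨j.1, by have := j.2; omega⟩ : Fin (2 * n)) (hmul p (hdil σ w)) *
        w (hIdx ⟨j.1, by have := j.2; omega⟩) =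
      2 * (p (yIdx n j) + σ * w (yIdx n j)) * w (xIdx n j) := by
    intro j
    have hj : (⟨j.1, by have := j.2; omega⟩ : Fin (2 * n)).1 < n := j.2
    rw [zCoef, dif_pos hj]
    have hy : yIdx n ⟨j.1, hj⟩ = yIdx n j := rfl
    have hx : hIdx (⟨j.1, by have := j.2; omega⟩ : Fin (2 * n)) = xIdx n j := rfl
    rw [hy, hx, curve_apply, if_neg (yIdx_ne_tIdx j)]
  have h2 : ∀ j : Fin n,
      zCoef (⟨n + j.1, by have := j.2; omega⟩ : Fin (2 * n)) (hmul p (hdil σ w)) *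
        w (hIdx ⟨n + j.1, by have := j.2; omega⟩) =
      -2 * (p (xIdx n j) + σ * w (xIdx n j)) * w (yIdx n j) := by
    intro j
    have hj : ¬ (⟨n + j.1, by have := j.2; omega⟩ : Fin (2 * n)).1 < n := by
      simp
    rw [zCoef, dif_neg hj]
    have hx : xIdx n ⟨(⟨n + j.1, by have := j.2; omega⟩ : Fin (2 * n)).1 - n,
        by have := j.2; omega⟩ = xIdx n j := by
      simp only [xIdx, Fin.mk.injEq]; omega
    have hy : hIdx (⟨n + j.1, by have := j.2; omega⟩ : Fin (2 * n)) = yIdx n j := rfl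
    rw [hx, hy, curve_apply, if_neg (xIdx_ne_tIdx j)]
  rw [Finset.sum_congr rfl fun j _ => h1 j, Finset.sum_congr rfl fun j _ => h2 j,
    ← Finset.sum_add_distrib, Cconst, Finset.mul_sum]
  exact Finset.sum_congr rfl fun j _ => by ring

/-- Chain rule along the dilated curve. -/
lemma chain_deriv (p w : HPoint n) (g : HPoint n → ℝ) (σ : ℝ)
    (hg : DifferentiableAt ℝ g (hmul p (hdil σ w))) :
    HasDerivAt (fun σ' => g (hmul p (hdil σ' w)))
      (∑ i : Fin (2 * n), Zd i g (hmul p (hdil σ w)) * w (hIdx i) +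
        2 * σ * w (tIdx n) * Td g (hmul p (hdil σ w))) σ := by
  have h1 := hg.hasFDerivAt.comp_hasDerivAt σ (curve_hasDerivAt p w σ)
  have h2 : (fderiv ℝ g (hmul p (hdil σ w))) (vvec p w σ) =
      ∑ i : Fin (2 * n), Zd i g (hmul p (hdil σ w)) * w (hIdx i) +
        2 * σ * w (tIdx n) * Td g (hmul p (hdil σ w)) := by
    rw [fderiv_apply_eq_sum]
    rw [Fin.sum_univ_castSucc]
    have hlast : (Fin.last (2 * n)) = tIdx n := rfl
    have hcs : ∀ i : Fin (2 * n), (i.castSucc : Fin (2 * n + 1)) = hIdx i := fun i => rfl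
    simp only [hlast, hcs]
    have hv1 : ∀ i : Fin (2 * n), vvec p w σ (hIdx i) = w (hIdx i) := fun i => by
      rw [vvec, if_neg (hIdx_ne_tIdx i)]
    have hv2 : vvec p w σ (tIdx n) = 2 * σ * w (tIdx n) + Cconst p w := by
      rw [vvec, if_pos rfl]
    simp only [hv1, hv2, Zd, Td]
    have hzs := zCoef_sum p w σ
    have e1 : ∑ i : Fin (2 * n), w (hIdx i) * pder (hIdx i) g (hmul p (hdil σ w)) =
        ∑ i : Fin (2 * n), pder (hIdx i) g (hmul p (hdil σ w)) * w (hIdx i) :=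
      Finset.sum_congr rfl fun i _ => mul_comm _ _
    have e2 : (∑ i : Fin (2 * n), zCoef i (hmul p (hdil σ w)) * w (hIdx i)) *
        pder (tIdx n) g (hmul p (hdil σ w)) =
        ∑ i : Fin (2 * n), zCoef i (hmul p (hdil σ w)) *
          pder (tIdx n) g (hmul p (hdil σ w)) * w (hIdx i) := by
      rw [Finset.sum_mul]
      exact Finset.sum_congr rfl fun i _ => by ring
    rw [← hzs, add_mul, e2, e1]
    simp only [add_mul]
    rw [Finset.sum_add_distrib]
    ring
  rw [← h2]
  exact h1

end Aux2
section Aux3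
variable {n : ℕ}

lemma zCoef_contDiff (i : Fin (2 * n)) {m : WithTop ℕ∞} : ContDiff ℝ m (zCoef i) := by
  by_cases h : i.1 < n
  · have : zCoef i = fun p : HPoint n => 2 * p (yIdx n ⟨i.1, h⟩) :=
      funext fun p => dif_pos h
    rw [this]
    exact contDiff_const.mul (ContinuousLinearMap.proj (R := ℝ) (φ := fun _ : Fin (2*n+1) => ℝ) (yIdx n ⟨i.1, h⟩)).contDiff
  · have : zCoef i = fun p : HPoint n =>
        -2 * p (xIdx n ⟨i.1 - n, by have := i.2; omega⟩) := funext fun p => dif_neg h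
    rw [this]
    exact contDiff_const.mul
      (ContinuousLinearMap.proj (R := ℝ) (φ := fun _ : Fin (2*n+1) => ℝ) (xIdx n ⟨i.1 - n, by have := i.2; omega⟩)).contDiff

lemma pder_contDiffAt {g : HPoint n → ℝ} {a : HPoint n} {m : WithTop ℕ∞}
    (hg : ContDiffAt ℝ (m + 1) g a) (k : Fin (2 * n + 1)) :
    ContDiffAt ℝ m (pder k g) a := by
  have h := hg.fderiv_right (m := m) le_rfl
  exact h.clm_apply contDiffAt_const

lemma Zd_contDiffAt {g : HPoint n → ℝ} {a : HPoint n} {m : WithTop ℕ∞}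
    (hg : ContDiffAt ℝ (m + 1) g a) (i : Fin (2 * n)) :
    ContDiffAt ℝ m (Zd i g) a :=
  (pder_contDiffAt hg _).add ((zCoef_contDiff i).contDiffAt.mul (pder_contDiffAt hg _))

lemma Td_contDiffAt {g : HPoint n → ℝ} {a : HPoint n} {m : WithTop ℕ∞}
    (hg : ContDiffAt ℝ (m + 1) g a) : ContDiffAt ℝ m (Td g) a :=
  pder_contDiffAt hg _

lemma pder_t_zCoef (i : Fin (2 * n)) (a : HPoint n) :
    pder (tIdx n) (zCoef i) a = 0 := by
  by_cases h : i.1 < n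
  · have hz : zCoef i = fun p : HPoint n => 2 * p (yIdx n ⟨i.1, h⟩) :=
      funext fun p => dif_pos h
    have hd : HasFDerivAt (fun p : HPoint n => 2 * p (yIdx n ⟨i.1, h⟩))
        ((2 : ℝ) • ContinuousLinearMap.proj (yIdx n ⟨i.1, h⟩)) a :=
      ((ContinuousLinearMap.proj (R := ℝ) (φ := fun _ : Fin (2*n+1) => ℝ)
        (yIdx n ⟨i.1, h⟩)).hasFDerivAt).const_mul 2
    rw [pder, hz, hd.fderiv]
    simp [ContinuousLinearMap.proj_apply, Pi.single_eq_of_ne (yIdx_ne_tIdx _)]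
  · have hz : zCoef i = fun p : HPoint n =>
        -2 * p (xIdx n ⟨i.1 - n, by have := i.2; omega⟩) := funext fun p => dif_neg h
    have hd : HasFDerivAt (fun p : HPoint n =>
        -2 * p (xIdx n ⟨i.1 - n, by have := i.2; omega⟩))
        ((-2 : ℝ) • ContinuousLinearMap.proj (xIdx n ⟨i.1 - n, by have := i.2; omega⟩)) a :=
      ((ContinuousLinearMap.proj (R := ℝ) (φ := fun _ : Fin (2*n+1) => ℝ)
        (xIdx n ⟨i.1 - n, by have := i.2; omega⟩)).hasFDerivAt).const_mul (-2)
    rw [pder, hz, hd.fderiv]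
    simp [ContinuousLinearMap.proj_apply, Pi.single_eq_of_ne (xIdx_ne_tIdx _)]

lemma pder_comm {f : HPoint n → ℝ} {a : HPoint n} (hf : ContDiffAt ℝ 2 f a)
    (u v : Fin (2 * n + 1)) : pder u (pder v f) a = pder v (pder u f) a := by
  have hd : DifferentiableAt ℝ (fderiv ℝ f) a :=
    (hf.fderiv_right (m := 1) (by norm_num)).differentiableAt one_ne_zero
  have key : ∀ u v : Fin (2 * n + 1), pder u (pder v f) a =
      fderiv ℝ (fderiv ℝ f) a (Pi.single u 1) (Pi.single v 1) := by
    intro u v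
    have : pder v f = fun x => (fderiv ℝ f x) (Pi.single v 1) := rfl
    rw [pder, this, fderiv_clm_apply hd (differentiableAt_const _)]
    simp
  rw [key u v, key v u]
  exact (hf.isSymmSndFDerivAt (by simp)).eq _ _
end Aux3
section Aux4
variable {n : ℕ}

lemma Td_Zd_comm {f : HPoint n → ℝ} {a : HPoint n} (hf : ContDiffAt ℝ 2 f a)
    (i : Fin (2 * n)) : Td (Zd i f) a = Zd i (Td f) a := by
  have hf' : ContDiffAt ℝ (1 + 1 : WithTop ℕ∞) f a := by
    have : (1 + 1 : WithTop ℕ∞) = 2 := by norm_num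
    rw [this]; exact hf
  have hA : DifferentiableAt ℝ (pder (hIdx i) f) a :=
    (pder_contDiffAt (m := 1) hf' _).differentiableAt one_ne_zero
  have hT : DifferentiableAt ℝ (pder (tIdx n) f) a :=
    (pder_contDiffAt (m := 1) hf' _).differentiableAt one_ne_zero
  have hz : DifferentiableAt ℝ (zCoef i) a :=
    ((zCoef_contDiff (m := 1) i).differentiable one_ne_zero).differentiableAt
  have hB : DifferentiableAt ℝ (fun x => zCoef i x * pder (tIdx n) f x) a := hz.mul hT
  have e1 : Td (Zd i f) a =
      fderiv ℝ (fun x => pder (hIdx i) f x + zCoef i x * pder (tIdx n) f x) a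
        (Pi.single (tIdx n) 1) := rfl
  have e2 : Zd i (Td f) a = pder (hIdx i) (pder (tIdx n) f) a +
      zCoef i a * pder (tIdx n) (pder (tIdx n) f) a := rfl
  rw [e1, e2, fderiv_fun_add hA hB, ContinuousLinearMap.add_apply, fderiv_fun_mul hz hT,
    ContinuousLinearMap.add_apply, ContinuousLinearMap.smul_apply,
    ContinuousLinearMap.smul_apply]
  have e3 : (fderiv ℝ (pder (hIdx i) f) a) (Pi.single (tIdx n) 1) =
      pder (tIdx n) (pder (hIdx i) f) a := rfl
  have e4 : (fderiv ℝ (pder (tIdx n) f) a) (Pi.single (tIdx n) 1) =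
      pder (tIdx n) (pder (tIdx n) f) a := rfl
  have e5 : (fderiv ℝ (zCoef i) a) (Pi.single (tIdx n) 1) = pder (tIdx n) (zCoef i) a := rfl
  rw [e3, e4, e5, pder_t_zCoef, pder_comm hf]
  simp
end Aux4


/-- Second-order derivative of a smooth function along dilated left
translations: with `q = p·δ_τ(w)`,
`d²/dτ² f(p·δ_τ(w)) = ⟨∇^{2,H} f(q) w_H, w_H⟩ + 2 w_N (Tf)(q) + 4τ w_N ⟨∇^H(Tf)(q), w_H⟩
 + 4τ² w_N² (TTf)(q)`. -/
theorem stmt5 {n : ℕ} (hn : 1 ≤ n) (Ω : Set (HPoint n)) (hΩ : IsOpen Ω)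
    (f : HPoint n → ℝ) (hf : ContDiffOn ℝ (⊤ : ℕ∞) f Ω)
    (p : HPoint n) (hp : p ∈ Ω) (w : HPoint n) (τ : ℝ) (hτ : 0 < τ)
    (hpt : hmul p (hdil τ w) ∈ Ω) :
    HasDerivAt (fun σ : ℝ => deriv (fun σ' : ℝ => f (hmul p (hdil σ' w))) σ)
      ((∑ i : Fin (2 * n), (∑ j : Fin (2 * n),
          Zd i (Zd j f) (hmul p (hdil τ w)) * w (hIdx j)) * w (hIdx i)) +
        2 * w (tIdx n) * Td f (hmul p (hdil τ w)) +
        4 * τ * w (tIdx n) *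
          (∑ i : Fin (2 * n), Zd i (Td f) (hmul p (hdil τ w)) * w (hIdx i)) +
        4 * τ ^ 2 * w (tIdx n) ^ 2 * Td (Td f) (hmul p (hdil τ w))) τ := by
  have hfq : ∀ m : ℕ, ContDiffAt ℝ m f (hmul p (hdil τ w)) :=
    fun m => (hf.contDiffAt (hΩ.mem_nhds hpt)).of_le (by exact_mod_cast le_top)
  -- the set of parameters where the curve stays in Ω
  have hcont : Continuous fun σ : ℝ => hmul p (hdil σ w) :=
    continuous_iff_continuousAt.mpr fun σ => (curve_hasDerivAt p w σ).continuousAt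
  have hU : IsOpen {σ : ℝ | hmul p (hdil σ w) ∈ Ω} := hΩ.preimage hcont
  have hτU : τ ∈ {σ : ℝ | hmul p (hdil σ w) ∈ Ω} := hpt
  -- eventual identification of the first derivative
  have hev : (fun σ : ℝ => deriv (fun σ' : ℝ => f (hmul p (hdil σ' w))) σ) =ᶠ[𝓝 τ]
      fun σ : ℝ => ∑ i : Fin (2 * n), Zd i f (hmul p (hdil σ w)) * w (hIdx i) +
        2 * σ * w (tIdx n) * Td f (hmul p (hdil σ w)) := by
    filter_upwards [hU.mem_nhds hτU] with σ hσ
    exact (chain_deriv p w f σ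
      ((hf.contDiffAt (hΩ.mem_nhds hσ)).differentiableAt (by simp))).deriv
  -- differentiability of the first-order operators at the point
  have hf2 : ContDiffAt ℝ (1 + 1 : WithTop ℕ∞) f (hmul p (hdil τ w)) := by simpa [one_add_one_eq_two] using hfq 2
  have hZdiff : ∀ i : Fin (2 * n), DifferentiableAt ℝ (Zd i f) (hmul p (hdil τ w)) :=
    fun i => (Zd_contDiffAt (m := 1) hf2 i).differentiableAt one_ne_zero
  have hTdiff : DifferentiableAt ℝ (Td f) (hmul p (hdil τ w)) :=
    (Td_contDiffAt (m := 1) hf2).differentiableAt one_ne_zero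
  -- derivative of the sum part
  have hsum : HasDerivAt
      (fun σ : ℝ => ∑ i : Fin (2 * n), Zd i f (hmul p (hdil σ w)) * w (hIdx i))
      (∑ i : Fin (2 * n),
        (∑ j : Fin (2 * n), Zd j (Zd i f) (hmul p (hdil τ w)) * w (hIdx j) +
          2 * τ * w (tIdx n) * Td (Zd i f) (hmul p (hdil τ w))) * w (hIdx i)) τ :=
    HasDerivAt.fun_sum fun i _ => (chain_deriv p w (Zd i f) τ (hZdiff i)).mul_const _
  -- derivative of the 2σ w_t (Tf) part
  have hT1 : HasDerivAt (fun σ : ℝ => 2 * σ * w (tIdx n)) (2 * w (tIdx n)) τ := by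
    simpa using ((hasDerivAt_id τ).const_mul (2 : ℝ)).mul_const (w (tIdx n))
  have hT2 := chain_deriv p w (Td f) τ hTdiff
  have hprod := hT1.mul hT2
  have hD1 := hsum.add hprod
  refine (hD1.congr_of_eventuallyEq hev).congr_deriv ?_
  -- identify the two expressions
  have hcomm : ∀ i : Fin (2 * n),
      Td (Zd i f) (hmul p (hdil τ w)) = Zd i (Td f) (hmul p (hdil τ w)) :=
    fun i => Td_Zd_comm (by simpa using hfq 2) i
  have hswap : ∑ i : Fin (2 * n),
      (∑ j : Fin (2 * n), Zd j (Zd i f) (hmul p (hdil τ w)) * w (hIdx j)) * w (hIdx i) =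
      ∑ i : Fin (2 * n),
      (∑ j : Fin (2 * n), Zd i (Zd j f) (hmul p (hdil τ w)) * w (hIdx j)) * w (hIdx i) := by
    simp only [Finset.sum_mul]
    rw [Finset.sum_comm]
    exact Finset.sum_congr rfl fun i _ => Finset.sum_congr rfl fun j _ => by ring
  simp only [add_mul, Finset.sum_add_distrib, hcomm]
  rw [hswap]
  have hfact : ∑ i : Fin (2 * n),
      2 * τ * w (tIdx n) * Zd i (Td f) (hmul p (hdil τ w)) * w (hIdx i) =
      2 * τ * w (tIdx n) *
        ∑ i : Fin (2 * n), Zd i (Td f) (hmul p (hdil τ w)) * w (hIdx i) := by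
    rw [Finset.mul_sum]
    exact Finset.sum_congr rfl fun i _ => by ring
  rw [hfact]
  ring
end
end

section
/- Let (X,‖·‖_X) be a real normed space, let Y ⊆ X be a linear subspace endowed with a norm ‖·‖_Y such that sup{‖y‖_Y : y ∈ Y, ‖y‖_X = 1} = ∞. Define g : X → [0,∞] by g(x) = ‖x‖_Y if x ∈ Y and g(x) = ∞ otherwise. If g is lower semicontinuous on X (with respect to ‖·‖_X), then Y is of the first category in X, i.e. Y is meager (a countable union of nowhere dense sets), so X ∖ Y is generic (comeager) in X. -/
/-!
The sublevel sets `F n = {g ≤ n}` are closed by lower semicontinuity and cover `Y`, so it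
suffices that each has empty interior. If the ball `B(x₀, ε)` lay in `F n`, then for every
`y ∈ Y` with `‖y‖_X = 1` both `x₀` and `x₀ + (ε/2) y` would lie in `F n`, whence
`‖(ε/2) y‖_Y ≤ 2n` and `‖·‖_Y ≤ 4n/ε` on the unit sphere of `X`.
-/

open Set

open scoped ENNReal Classical

namespace Seminorm

variable {X : Type*}

theorem isClosed_image_closedBall_of_lowerSemicontinuous {𝕜 : Type*} [SeminormedRing 𝕜]
    [TopologicalSpace X] [AddCommGroup X] [Module 𝕜 X] {Y : Submodule 𝕜 X} (p : Seminorm 𝕜 Y)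
    (hlsc : LowerSemicontinuous
      (fun x : X => if h : x ∈ Y then ENNReal.ofReal (p ⟨x, h⟩) else (⊤ : ℝ≥0∞)))
    {r : ℝ} (hr : 0 ≤ r) :
    IsClosed (((↑) : Y → X) '' p.closedBall 0 r) := by
  convert hlsc.isClosed_preimage (ENNReal.ofReal r) using 1
  ext x
  by_cases hx : x ∈ Y <;> simp [hx, ENNReal.ofReal_le_ofReal_iff hr, p.mem_closedBall_zero]

variable [NormedAddCommGroup X] [NormedSpace ℝ X] {Y : Submodule ℝ X} (p : Seminorm ℝ Y)

theorem bddAbove_image_sphere_of_nonempty_interior {r : ℝ}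
    (h : (interior (((↑) : Y → X) '' p.closedBall 0 r)).Nonempty) :
    BddAbove (p '' {y | ‖(y : X)‖ = 1}) := by
  obtain ⟨x₀, hx₀⟩ := h
  obtain ⟨ε, hε, hball⟩ := Metric.isOpen_iff.mp isOpen_interior x₀ hx₀
  have hmem : ∀ x ∈ Metric.ball x₀ ε, ∃ z : Y, p z ≤ r ∧ (z : X) = x := fun x hx => by
    simpa only [mem_image, p.mem_closedBall_zero] using interior_subset (hball hx)
  obtain ⟨z₀, hz₀, rfl⟩ := hmem _ (Metric.mem_ball_self hε)
  refine ⟨4 * r / ε, ?_⟩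
  rintro _ ⟨y, hy, rfl⟩
  have hshift : (z₀ : X) + (ε / 2) • (y : X) ∈ Metric.ball (z₀ : X) ε := by
    rw [Metric.mem_ball, dist_eq_norm, add_sub_cancel_left, norm_smul, hy, Real.norm_eq_abs,
      abs_of_pos (half_pos hε)]
    linarith
  obtain ⟨z₁, hz₁, hz₁_eq⟩ := hmem _ hshift
  have hz₁_sub : z₁ - z₀ = (ε / 2) • y := Subtype.ext (by simp [hz₁_eq])
  have hbound : ε / 2 * p y ≤ 2 * r := by
    calc ε / 2 * p y = p (z₁ - z₀) := by
          rw [hz₁_sub, map_smul_eq_mul, Real.norm_eq_abs, abs_of_pos (half_pos hε)]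
      _ ≤ p z₁ + p z₀ := map_sub_le_add p _ _
      _ ≤ 2 * r := by linarith
  rw [le_div_iff₀ hε]
  linarith

theorem isMeagre_submodule_of_isClosed_image_closedBall
    (hclosed : ∀ n : ℕ, IsClosed (((↑) : Y → X) '' p.closedBall 0 n))
    (hunbounded : ¬BddAbove (p '' {y | ‖(y : X)‖ = 1})) :
    IsMeagre (Y : Set X) := by
  have hcover : (Y : Set X) ⊆ ⋃ n : ℕ, ((↑) : Y → X) '' p.closedBall 0 n := fun x hx =>
    mem_iUnion.2 ⟨⌈p ⟨x, hx⟩⌉₊, ⟨x, hx⟩, p.mem_closedBall_zero.2 (Nat.le_ceil _), rfl⟩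
  refine (isMeagre_iUnion fun n => IsNowhereDense.isMeagre ?_).mono hcover
  refine (hclosed n).isNowhereDense_iff.2 (not_nonempty_iff_eq_empty.1 fun h => ?_)
  exact hunbounded (p.bddAbove_image_sphere_of_nonempty_interior h)

end Seminorm

theorem stmt16_general {X : Type*} [NormedAddCommGroup X] [NormedSpace ℝ X]
    (Y : Submodule ℝ X) (nrm : Y → ℝ)
    (htriangle : ∀ y z, nrm (y + z) ≤ nrm y + nrm z)
    (hhomog : ∀ (r : ℝ) (y : Y), nrm (r • y) = |r| * nrm y)
    (hunbounded : ∀ C : ℝ, ∃ y : Y, ‖(y : X)‖ = 1 ∧ C ≤ nrm y)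
    (hlsc : LowerSemicontinuous
      (fun x : X => if h : x ∈ Y then ENNReal.ofReal (nrm ⟨x, h⟩) else (⊤ : ℝ≥0∞))) :
    IsMeagre (Y : Set X) ∧ ((Y : Set X)ᶜ ∈ residual X) := by
  let p : Seminorm ℝ Y := Seminorm.of nrm htriangle fun r y => by rw [hhomog, Real.norm_eq_abs]
  have hmeagre : IsMeagre (Y : Set X) := by
    refine p.isMeagre_submodule_of_isClosed_image_closedBall
      (fun n => p.isClosed_image_closedBall_of_lowerSemicontinuous hlsc n.cast_nonneg) ?_
    rintro ⟨C, hC⟩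
    obtain ⟨y, hy, hCy⟩ := hunbounded (C + 1)
    have hyC : nrm y ≤ C := hC ⟨y, hy, rfl⟩
    linarith
  exact ⟨hmeagre, hmeagre⟩

/-- A functional-analytic Baire category lemma: if `Y` is a subspace of a
normed space `X` endowed with a norm `‖·‖_Y` which is unbounded on the unit sphere of
`‖·‖_X`, and the extended functional `g = ‖·‖_Y` (set to `∞` outside `Y`) is lower
semicontinuous on `X`, then `Y` is meager in `X`, i.e. `X ∖ Y` is comeager. -/
theorem stmt16 {X : Type*} [NormedAddCommGroup X] [NormedSpace ℝ X]
    (Y : Submodule ℝ X) (nrm : Y → ℝ)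
    (hnonneg : ∀ y, 0 ≤ nrm y)
    (htriangle : ∀ y z, nrm (y + z) ≤ nrm y + nrm z)
    (hhomog : ∀ (r : ℝ) (y : Y), nrm (r • y) = |r| * nrm y)
    (hunbounded : ∀ C : ℝ, ∃ y : Y, ‖(y : X)‖ = 1 ∧ C ≤ nrm y)
    (hlsc : LowerSemicontinuous
      (fun x : X => if h : x ∈ Y then ENNReal.ofReal (nrm ⟨x, h⟩) else (⊤ : ℝ≥0∞))) :
    IsMeagre (Y : Set X) ∧ ((Y : Set X)ᶜ ∈ residual X) :=
  stmt16_general Y nrm htriangle hhomog hunbounded hlsc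
end
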